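/- arXiv:2206.15124 — 3 statements merged into one kernel-verified Lean document; each statement's English description precedes it below -/
import Mathlib

section
/- Let 0 < r_1 < r_2, σ > 0, p ∈ (0,1), K > 0, α(r) = (1 + √(8r/σ² + 1))/2, and let F := p δ_{r_1} + (1−p) δ_{r_2}, so ∫α(r)dF(r) = pα(r_1)+(1−p)α(r_2), ∫r dF(r) = pr_1+(1−p)r_2 and ∫((α(r)−1)/r)dF(r) = p(α(r_1)−1)/r_1 + (1−p)(α(r_2)−1)/r_2. Define x̲ := K(α(r_2)r_1 − α(r_1)r_2)/((r_1 − r_2)(∫((α(r)−1)/r)dF(r)) − (α(r_1) − α(r_2))) and x̄ := K ∫ r dF(r). Then x̲ ∈ [r_1 r_2 K/(p r_2 + (1−p) r_1), x̄) if and only if ∫ α(r) dF(r) < (∫ r dF(r)) · (∫ ((α(r)−1)/r) dF(r)). -/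
open Set

lemma stmt_10_main_alg (p r1 r2 K a1 a2 : ℝ) (hp : 0 < p) (hp1 : p < 1)
    (hr1 : 0 < r1) (hr12 : r1 < r2) (hK : 0 < K)
    (h1 : (a2 - a1) * r1 < (r2 - r1) * (a1 - 1))
    (h2 : (a2 - a1) * r2 < (r2 - r1) * (a2 - 1)) :
    K * (a2 * r1 - a1 * r2) /
        ((r1 - r2) * (p * (a1 - 1) / r1 + (1 - p) * (a2 - 1) / r2) - (a1 - a2)) ∈
      Ico (r1 * r2 * K / (p * r2 + (1 - p) * r1)) (K * (p * r1 + (1 - p) * r2)) ↔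
      p * a1 + (1 - p) * a2 <
        (p * r1 + (1 - p) * r2) * (p * (a1 - 1) / r1 + (1 - p) * (a2 - 1) / r2) := by
  have hr2 : 0 < r2 := hr1.trans hr12
  have hq : 0 < 1 - p := by linarith
  have h21 : 0 < r2 - r1 := by linarith
  have hrr : 0 < r1 * r2 := mul_pos hr1 hr2
  have hM : 0 < p * r2 + (1 - p) * r1 := by positivity
  set I : ℝ := p * (a1 - 1) / r1 + (1 - p) * (a2 - 1) / r2 with hIdef
  have hI : I * (r1 * r2) = p * (a1 - 1) * r2 + (1 - p) * (a2 - 1) * r1 := by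
    rw [hIdef]; field_simp
  have hD : (r1 - r2) * I - (a1 - a2) < 0 := by
    nlinarith [mul_lt_mul_of_pos_left h1 (mul_pos hp hr2),
      mul_lt_mul_of_pos_left h2 (mul_pos hq hr1), hI, hrr]
  rw [mem_Ico, le_div_iff_of_neg hD, div_lt_iff_of_neg hD, div_mul_eq_mul_div,
    le_div_iff₀ hM]
  have e1 : r1 * r2 * K * ((r1 - r2) * I - (a1 - a2)) =
      K * ((r1 - r2) * (p * (a1 - 1) * r2 + (1 - p) * (a2 - 1) * r1) -
        (a1 - a2) * (r1 * r2)) := by linear_combination K * (r1 - r2) * hI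
  have e2 : K * (a2 * r1 - a1 * r2) -
      K * (p * r1 + (1 - p) * r2) * ((r1 - r2) * I - (a1 - a2)) =
      K * (r2 - r1) * ((p * r1 + (1 - p) * r2) * I - (p * a1 + (1 - p) * a2)) := by
    ring
  have hleft : K * (a2 * r1 - a1 * r2) * (p * r2 + (1 - p) * r1) ≤
      r1 * r2 * K * ((r1 - r2) * I - (a1 - a2)) := by
    rw [e1]; nlinarith [mul_pos hK (mul_pos h21 hM)]
  constructor
  · rintro ⟨-, h⟩
    nlinarith [e2, h, mul_pos hK h21]
  · intro h
    refine ⟨hleft, ?_⟩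
    nlinarith [e2, mul_pos (mul_pos hK h21) (sub_pos.mpr h)]

/-- Lemma 5.1: the candidate lower threshold `x̲` lies in
`[r₁r₂K/(pr₂+(1−p)r₁), x̄)` iff `∫α dF < (∫r dF)(∫(α−1)/r dF)`. -/
theorem stmt_10 (σ p r1 r2 K : ℝ) (hσ : 0 < σ) (hp : 0 < p) (hp1 : p < 1)
    (hr1 : 0 < r1) (hr12 : r1 < r2) (hK : 0 < K) :
    let α : ℝ → ℝ := fun s => (1 + Real.sqrt (8 * s / σ ^ 2 + 1)) / 2
    let I := p * (α r1 - 1) / r1 + (1 - p) * (α r2 - 1) / r2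
    let xl := K * (α r2 * r1 - α r1 * r2) / ((r1 - r2) * I - (α r1 - α r2))
    let xbar := K * (p * r1 + (1 - p) * r2)
    (xl ∈ Ico (r1 * r2 * K / (p * r2 + (1 - p) * r1)) xbar ↔
      p * α r1 + (1 - p) * α r2 < (p * r1 + (1 - p) * r2) * I) := by
  intro α I xl xbar
  have hσ2 : (0:ℝ) < σ ^ 2 := by positivity
  have hr2 : 0 < r2 := hr1.trans hr12
  set u1 := Real.sqrt (8 * r1 / σ ^ 2 + 1) with hu1def
  set u2 := Real.sqrt (8 * r2 / σ ^ 2 + 1) with hu2def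
  have hu1 : 1 < u1 := by
    nlinarith [Real.sq_sqrt (by positivity : (0:ℝ) ≤ 8 * r1 / σ ^ 2 + 1),
      Real.sqrt_nonneg (8 * r1 / σ ^ 2 + 1),
      (by positivity : 0 < 8 * r1 / σ ^ 2)]
  have hu2 : 1 < u2 := by
    nlinarith [Real.sq_sqrt (by positivity : (0:ℝ) ≤ 8 * r2 / σ ^ 2 + 1),
      Real.sqrt_nonneg (8 * r2 / σ ^ 2 + 1),
      (by positivity : 0 < 8 * r2 / σ ^ 2)]
  have hu12 : u1 < u2 := by
    rw [hu1def, hu2def]; apply Real.sqrt_lt_sqrt (by positivity); gcongr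
  have k1 : σ ^ 2 * u1 ^ 2 = 8 * r1 + σ ^ 2 := by
    have h := Real.sq_sqrt (by positivity : (0:ℝ) ≤ 8 * r1 / σ ^ 2 + 1)
    rw [← hu1def] at h
    field_simp at h
    linarith
  have k2 : σ ^ 2 * u2 ^ 2 = 8 * r2 + σ ^ 2 := by
    have h := Real.sq_sqrt (by positivity : (0:ℝ) ≤ 8 * r2 / σ ^ 2 + 1)
    rw [← hu2def] at h
    field_simp at h
    linarith
  have h1 : (α r2 - α r1) * r1 < (r2 - r1) * (α r1 - 1) := by
    show ((1 + u2) / 2 - (1 + u1) / 2) * r1 < (r2 - r1) * ((1 + u1) / 2 - 1)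
    nlinarith [mul_pos hσ2 (mul_pos (mul_pos (sub_pos.mpr hu12) (sub_pos.mpr hu1))
      (sub_pos.mpr hu2)), k1, k2]
  have h2 : (α r2 - α r1) * r2 < (r2 - r1) * (α r2 - 1) := by
    show ((1 + u2) / 2 - (1 + u1) / 2) * r2 < (r2 - r1) * ((1 + u2) / 2 - 1)
    nlinarith [mul_pos hσ2 (mul_pos (mul_pos (sub_pos.mpr hu12) (sub_pos.mpr hu1))
      (sub_pos.mpr hu2)), k1, k2]
  exact stmt_10_main_alg p r1 r2 K (α r1) (α r2) hp hp1 hr1 hr12 hK h1 h2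
end

section
/- Let σ > 0 and 0 < r_1 < r_2 with α(r) = (1 + √(8r/σ² + 1))/2. Then there exists R > 0 such that whenever r_2 − r_1 > R (with r_1 > 0 fixed) and p ∈ (0,1) is fixed, the inequality p α(r_1) + (1−p) α(r_2) < (p r_1 + (1−p) r_2)(p (α(r_1)−1)/r_1 + (1−p)(α(r_2)−1)/r_2) holds. -/
set_option maxHeartbeats 1600000 in
/-- the mixed-equilibrium existence condition holds whenever the
gap `r₂ − r₁` is sufficiently large. -/
theorem stmt_11 (σ r1 p : ℝ) (hσ : 0 < σ) (hr1 : 0 < r1) (hp : 0 < p)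
    (hp1 : p < 1) :
    let α : ℝ → ℝ := fun s => (1 + Real.sqrt (8 * s / σ ^ 2 + 1)) / 2
    ∃ R > 0, ∀ r2 : ℝ, r1 < r2 → R < r2 - r1 →
      p * α r1 + (1 - p) * α r2 <
        (p * r1 + (1 - p) * r2) *
          (p * (α r1 - 1) / r1 + (1 - p) * (α r2 - 1) / r2) := by
  intro α
  have hα : ∀ s, α s = (1 + Real.sqrt (8 * s / σ ^ 2 + 1)) / 2 := fun s => rfl
  clear_value α
  have hσ2 : (0:ℝ) < σ ^ 2 := by positivity
  have hp' : 0 < 1 - p := by linarith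
  set s1 : ℝ := Real.sqrt (8 * r1 / σ ^ 2 + 1) with hs1def
  have hs1 : 1 < s1 := by
    rw [hs1def, show (1:ℝ) = Real.sqrt 1 by simp]
    apply Real.sqrt_lt_sqrt (by norm_num)
    have : 0 < 8 * r1 / σ ^ 2 := by positivity
    linarith [Real.sqrt_one]
  set c : ℝ := (s1 - 1) / (2 * r1) with hcdef
  have hc : 0 < c := div_pos (by linarith) (by linarith)
  have hc0 : c ≠ 0 := ne_of_gt hc
  set u : ℝ := c * σ ^ 2 with hudef
  have hu : 0 < u := by positivity
  set v : ℝ := 1 / u with hvdef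
  have hv : 0 < v := by positivity
  have huv : u * v = 1 := by rw [hvdef]; field_simp
  set q : ℝ := 1 / (p * (1 - p)) with hqdef
  have hq : p * (1 - p) * q = 1 := by
    rw [hqdef]; field_simp
  have hα1 : α r1 = (1 + s1) / 2 := by rw [hα, hs1def]
  set R0 : ℝ := (2 / c) * (α r1 + q + 1 / 2 + u / 16 + v) with hR0
  clear_value s1 c u v q R0
  refine ⟨|R0| + 1, by positivity, fun r2 hlt hgap => ?_⟩
  have hr2 : 0 < r2 := lt_trans hr1 hlt
  set s2 : ℝ := Real.sqrt (8 * r2 / σ ^ 2 + 1) with hs2def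
  have hs2sq : s2 ^ 2 = 8 * r2 / σ ^ 2 + 1 := Real.sq_sqrt (by positivity)
  have hs2 : 1 ≤ s2 := by
    rw [hs2def, show (1:ℝ) = Real.sqrt 1 by simp]
    apply Real.sqrt_le_sqrt
    have : 0 ≤ 8 * r2 / σ ^ 2 := by positivity
    linarith [Real.sqrt_one]
  have hα2 : α r2 = (1 + s2) / 2 := by rw [hα, hs2def]
  clear_value s2
  -- bound on s2
  have h3 : u * v * s2 = s2 := by rw [huv, one_mul]
  have h4 : u * (v * v) = v := by rw [← mul_assoc, huv, one_mul]
  have h5 : u * s2 ^ 2 = 8 * c * r2 + u := by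
    rw [hs2sq, hudef]; field_simp
  have hs2le : s2 ≤ c * r2 + u / 8 + 2 * v := by
    have hA : 0 ≤ u * (s2 - 4 * v) ^ 2 := mul_nonneg hu.le (sq_nonneg _)
    have hB : u * (s2 - 4 * v) ^ 2
        = u * s2 ^ 2 - 8 * (u * v * s2) + 16 * (u * (v * v)) := by ring
    rw [hB, h3, h4, h5] at hA
    linarith
  -- r2 is large
  have hr2R0 : R0 < r2 := by
    have : R0 ≤ |R0| := le_abs_self R0
    linarith
  have h7 : c * (2 / c) = 2 := by field_simp
  have hcR0 : c * R0 = 2 * (α r1 + q + 1 / 2 + u / 16 + v) := by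
    rw [hR0, ← mul_assoc, h7]
  have hkey : α r1 + α r2 + q < c * r2 := by
    have h6 : c * R0 < c * r2 := mul_lt_mul_of_pos_left hr2R0 hc
    rw [hα2]
    linarith [hs2le]
  -- main estimate
  set d : ℝ := (α r2 - 1) / r2 with hddef
  have hd : 0 ≤ d := by
    apply div_nonneg _ hr2.le
    rw [hα2]; linarith
  clear_value d
  have hr1c : r1 * c = α r1 - 1 := by
    rw [hcdef, hα1]; field_simp; ring
  have hr2d : r2 * d = α r2 - 1 := by
    rw [hddef]; field_simp
  have hgoal2 : p * (α r1 - 1) / r1 = p * c := by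
    rw [← hr1c]; field_simp
  have hgoal3 : (1 - p) * (α r2 - 1) / r2 = (1 - p) * d := by
    rw [← hr2d]; field_simp
  rw [hgoal2, hgoal3]
  have hmul : p * (1 - p) * (α r1 + α r2 + q) < p * (1 - p) * (c * r2) :=
    mul_lt_mul_of_pos_left hkey (mul_pos hp hp')
  have e1 : p * r1 * (p * c) = p ^ 2 * (α r1 - 1) := by rw [← hr1c]; ring
  have e2 : (1 - p) * r2 * ((1 - p) * d) = (1 - p) ^ 2 * (α r2 - 1) := by
    rw [← hr2d]; ring
  have e3 : 0 ≤ p * r1 * ((1 - p) * d) :=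
    mul_nonneg (mul_nonneg hp.le hr1.le) (mul_nonneg hp'.le hd)
  have e4 : (1 - p) * r2 * (p * c) = p * (1 - p) * (c * r2) := by ring
  have hmul' : p * (1 - p) * α r1 + p * (1 - p) * α r2 + 1
      < p * (1 - p) * (c * r2) := by
    have h8 : p * (1 - p) * (α r1 + α r2 + q)
        = p * (1 - p) * α r1 + p * (1 - p) * α r2 + p * (1 - p) * q := by ring
    rw [h8, hq] at hmul
    exact hmul
  have expand : (p * r1 + (1 - p) * r2) * (p * c + (1 - p) * d)
      = p * r1 * (p * c) + p * r1 * ((1 - p) * d) + (1 - p) * r2 * (p * c)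
        + (1 - p) * r2 * ((1 - p) * d) := by ring
  rw [expand, e1, e2, e4]
  have hpp : 0 < p * (1 - p) := mul_pos hp hp'
  linarith [hmul', e3, hpp]
end

section
/- Let σ > 0, 0 < r_1 < r_2, p ∈ (0,1), K > 0, α_i := α(r_i) = (1 + √(8r_i/σ² + 1))/2, and define x̲ := K · (p α_1 + (1−p) α_2) / (p (α_1 − 1)/r_1 + (1−p)(α_2 − 1)/r_2). Define J(x) := p[(K − x̲/r_1)(x/x̲)^{α_1} + x/r_1] + (1−p)[(K − x̲/r_2)(x/x̲)^{α_2} + x/r_2] for x ∈ (0, x̲]. Then J'(x̲−) = 0. -/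
set_option maxHeartbeats 1000000


open Set

/-- smooth fit at the pure equilibrium threshold `x̲`: the left
derivative of the mixture cost function vanishes at `x̲`. -/
theorem stmt_13 (σ p r1 r2 K : ℝ) (hσ : 0 < σ) (hp : 0 < p) (hp1 : p < 1)
    (hr1 : 0 < r1) (hr12 : r1 < r2) (hK : 0 < K) :
    let α1 : ℝ := (1 + Real.sqrt (8 * r1 / σ ^ 2 + 1)) / 2
    let α2 : ℝ := (1 + Real.sqrt (8 * r2 / σ ^ 2 + 1)) / 2
    let xl := K * (p * α1 + (1 - p) * α2) /
      (p * (α1 - 1) / r1 + (1 - p) * (α2 - 1) / r2)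
    let J : ℝ → ℝ := fun x =>
      p * ((K - xl / r1) * (x / xl) ^ α1 + x / r1) +
        (1 - p) * ((K - xl / r2) * (x / xl) ^ α2 + x / r2)
    derivWithin J (Iic xl) xl = 0 := by
  intro α1 α2 xl J
  have hr2 : 0 < r2 := hr1.trans hr12
  have hq : 0 < 1 - p := by linarith
  have hσ2 : (0:ℝ) < σ ^ 2 := by positivity
  have h1 : (1:ℝ) < Real.sqrt (8 * r1 / σ ^ 2 + 1) := by
    have h : 0 < 8 * r1 / σ ^ 2 := by positivity
    exact (Real.lt_sqrt (by norm_num)).mpr (by nlinarith)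
  have h2 : (1:ℝ) < Real.sqrt (8 * r2 / σ ^ 2 + 1) := by
    have h : 0 < 8 * r2 / σ ^ 2 := by positivity
    exact (Real.lt_sqrt (by norm_num)).mpr (by nlinarith)
  have hα1 : 1 < α1 := by show 1 < (1 + Real.sqrt (8 * r1 / σ ^ 2 + 1)) / 2; linarith
  have hα2 : 1 < α2 := by show 1 < (1 + Real.sqrt (8 * r2 / σ ^ 2 + 1)) / 2; linarith
  have hN : 0 < p * α1 + (1 - p) * α2 := by nlinarith
  have hD : 0 < p * (α1 - 1) / r1 + (1 - p) * (α2 - 1) / r2 :=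
    add_pos (div_pos (mul_pos hp (by linarith)) hr1)
      (div_pos (mul_pos hq (by linarith)) hr2)
  have hxl : 0 < xl := div_pos (mul_pos hK hN) hD
  have key : ∀ α : ℝ, HasDerivAt (fun x : ℝ => (x / xl) ^ α) (α / xl) xl := by
    intro α
    have hne : xl / xl ≠ 0 := by rw [div_self hxl.ne']; exact one_ne_zero
    have h := ((hasDerivAt_id xl).div_const xl).rpow_const (p := α) (Or.inl hne)
    rw [show α / xl = 1 / xl * α * (xl / xl) ^ (α - 1) by
      rw [div_self hxl.ne', Real.one_rpow]; ring]
    exact h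
  have hJ : HasDerivAt J (p * ((K - xl / r1) * (α1 / xl) + 1 / r1) +
      (1 - p) * ((K - xl / r2) * (α2 / xl) + 1 / r2)) xl := by
    exact ((((key α1).const_mul _).add ((hasDerivAt_id xl).div_const r1)).const_mul p).add
      ((((key α2).const_mul _).add ((hasDerivAt_id xl).div_const r2)).const_mul (1 - p))
  rw [(hJ.hasDerivWithinAt.derivWithin (uniqueDiffOn_Iic xl xl self_mem_Iic))]
  have hxl_def : xl = K * (p * α1 + (1 - p) * α2) /
      (p * (α1 - 1) / r1 + (1 - p) * (α2 - 1) / r2) := rfl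
  have hxlD : xl * (p * (α1 - 1) / r1 + (1 - p) * (α2 - 1) / r2)
      = K * (p * α1 + (1 - p) * α2) := by
    rw [hxl_def, div_mul_cancel₀ _ hD.ne']
  field_simp at hxlD ⊢
  linear_combination (-1) * hxlD
end
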